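/- Let C --F--> D --G--> E be multifunctors between closed multicategories. Then the closing transformation of the composite satisfies (G∘F)̲_{X₁,…,Xₘ;Y} = G(F̲_{X₁,…,Xₘ;Y}) · G̲_{FX₁,…,FXₘ;FY}. -/

import Mathlib

universe u v

/-- A family of multimorphisms `f_i : Xss_i → Ys_i` (with matching lengths),
used to express simultaneous composition in a multicategory. -/
inductive HomFam (Obj : Type u) (Hom : List Obj → Obj → Type v) :
    List (List Obj) → List Obj → Type (max u v)
  | nil : HomFam Obj Hom [] []
  | cons {Xs Y Xss Ys} : Hom Xs Y → HomFam Obj Hom Xss Ys →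
      HomFam Obj Hom (Xs :: Xss) (Y :: Ys)

/-- A family of families of multimorphisms. -/
inductive FamFam (Obj : Type u) (Hom : List Obj → Obj → Type v) :
    List (List (List Obj)) → List (List Obj) → Type (max u v)
  | nil : FamFam Obj Hom [] []
  | cons {Xss Ys Xsss Yss} : HomFam Obj Hom Xss Ys → FamFam Obj Hom Xsss Yss →
      FamFam Obj Hom (Xss :: Xsss) (Ys :: Yss)

variable {Obj : Type u} {Hom : List Obj → Obj → Type v}

/-- The family of identities on a list of objects. -/
def idFam (ident : ∀ X, Hom [X] X) : ∀ Ys : List Obj,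
    HomFam Obj Hom (Ys.map fun y => [y]) Ys
  | [] => .nil
  | y :: ys => .cons (ident y) (idFam ident ys)

/-- Concatenation of families. -/
def appendFam : ∀ {A B C D}, HomFam Obj Hom A B → HomFam Obj Hom C D →
    HomFam Obj Hom (A ++ C) (B ++ D)
  | _, _, _, _, .nil, t => t
  | _, _, _, _, .cons f fs, t => .cons f (appendFam fs t)

/-- Flattening a family of families. -/
def flattenFam : ∀ {Xsss Yss}, FamFam Obj Hom Xsss Yss →
    HomFam Obj Hom Xsss.flatten Yss.flatten
  | _, _, .nil => .nil
  | _, _, .cons fs fss => appendFam fs (flattenFam fss)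

/-- Componentwise composition of a family of families with a family. -/
def zipComp
    (comp : ∀ {Xss Ys Z}, HomFam Obj Hom Xss Ys → Hom Ys Z → Hom Xss.flatten Z) :
    ∀ {Xsss Yss Zs}, FamFam Obj Hom Xsss Yss → HomFam Obj Hom Yss Zs →
      HomFam Obj Hom (Xsss.map List.flatten) Zs
  | _, _, _, .nil, .nil => .nil
  | _, _, _, .cons fs fss, .cons g gs => .cons (comp fs g) (zipComp comp fss gs)

/-- A multicategory: objects, multimorphisms `X₁,…,Xₙ → Y`, identities and an
associative and unital simultaneous composition `(f₁,…,fₙ) · g`. -/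
structure Multicategory : Type (max (u + 1) (v + 1)) where
  Obj : Type u
  Hom : List Obj → Obj → Type v
  ident : ∀ X : Obj, Hom [X] X
  comp : ∀ {Xss : List (List Obj)} {Ys : List Obj} {Z : Obj},
    HomFam Obj Hom Xss Ys → Hom Ys Z → Hom Xss.flatten Z
  id_comp : ∀ {Ys Z} (g : Hom Ys Z), HEq (comp (idFam ident Ys) g) g
  comp_id : ∀ {Xs Y} (f : Hom Xs Y), HEq (comp (.cons f .nil) (ident Y)) f
  assoc : ∀ {Xsss Yss Zs Z} (fss : FamFam Obj Hom Xsss Yss)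
    (gs : HomFam Obj Hom Yss Zs) (h : Hom Zs Z),
    HEq (comp (zipComp (fun fs g => comp fs g) fss gs) h)
        (comp (flattenFam fss) (comp gs h))

namespace Multicategory

variable (M : Multicategory.{u, v})

theorem map_singleton_flatten (l : List M.Obj) :
    (l.map fun x => [x]).flatten = l := by
  induction l <;> simp_all

theorem sflat (Xs Ys : List M.Obj) :
    ((Xs.map fun x => [x]) ++ [Ys]).flatten = Xs ++ Ys := by
  induction Xs <;> simp_all

theorem sflat2 (Xs Γ : List M.Obj) :
    (Xs :: (Γ.map fun x => [x])).flatten = Xs ++ Γ := by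
  simp [List.flatten_cons, map_singleton_flatten]

/-- `(1,…,1,f) · g` : plugging `f` into the last argument of `g`. -/
def plug {Xs Ys : List M.Obj} {H Z : M.Obj} (f : M.Hom Ys H)
    (g : M.Hom (Xs ++ [H]) Z) : M.Hom (Xs ++ Ys) Z :=
  cast (congrArg (M.Hom · Z) (M.sflat Xs Ys))
    (M.comp (appendFam (idFam M.ident Xs) (.cons f .nil)) g)

/-- `(f,1,…,1) · g` : plugging `f` into the first argument of `g`. -/
def plugFirst {Xs Γ : List M.Obj} {Y Z : M.Obj} (f : M.Hom Xs Y)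
    (g : M.Hom (Y :: Γ) Z) : M.Hom (Xs ++ Γ) Z :=
  cast (congrArg (M.Hom · Z) (M.sflat2 Xs Γ))
    (M.comp (.cons f (idFam M.ident Γ)) g)

/-- `(f) · h` : composing a multimorphism with a unary morphism. -/
def postcomp {Γ : List M.Obj} {Y Z : M.Obj} (f : M.Hom Γ Y) (h : M.Hom [Y] Z) :
    M.Hom Γ Z :=
  cast (congrArg (M.Hom · Z) (by simp : ([Γ].flatten : List M.Obj) = Γ))
    (M.comp (.cons f .nil) h)

/-- Composition in the underlying category. -/
def comp1 {X Y Z : M.Obj} (f : M.Hom [X] Y) (g : M.Hom [Y] Z) : M.Hom [X] Z :=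
  M.postcomp f g

/-- `(a, b) · g` : binary simultaneous composition. -/
def pair {As Bs : List M.Obj} {A' B' Cc : M.Obj} (a : M.Hom As A') (b : M.Hom Bs B')
    (g : M.Hom [A', B'] Cc) : M.Hom (As ++ Bs) Cc :=
  cast (congrArg (M.Hom · Cc) (by simp : ([As, Bs].flatten : List M.Obj) = As ++ Bs))
    (M.comp (.cons a (.cons b .nil)) g)

/-- `(f₁,…,fₘ,1) · g` for a family of unary morphisms `fᵢ`. -/
def sideComp {As Bs : List M.Obj} (fs : HomFam M.Obj M.Hom (As.map fun a => [a]) Bs)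
    {H Z : M.Obj} (g : M.Hom (Bs ++ [H]) Z) : M.Hom (As ++ [H]) Z :=
  cast (congrArg (M.Hom · Z) (M.sflat As [H]))
    (M.comp (appendFam fs (.cons (M.ident H) .nil)) g)

end Multicategory

/-- The image of a family of multimorphisms under a multifunctor. -/
def mapFam {M N : Multicategory.{u, v}} (obj : M.Obj → N.Obj)
    (map : ∀ {Xs Y}, M.Hom Xs Y → N.Hom (Xs.map obj) (obj Y)) :
    ∀ {Xss Ys}, HomFam M.Obj M.Hom Xss Ys →
      HomFam N.Obj N.Hom (Xss.map (List.map obj)) (Ys.map obj)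
  | _, _, .nil => .nil
  | _, _, .cons f fs => .cons (map f) (mapFam obj @map fs)

/-- A multifunctor between multicategories. -/
structure Multifunctor (M N : Multicategory.{u, v}) : Type (max u v) where
  obj : M.Obj → N.Obj
  map : ∀ {Xs Y}, M.Hom Xs Y → N.Hom (Xs.map obj) (obj Y)
  map_ident : ∀ X, map (M.ident X) = N.ident (obj X)
  map_comp : ∀ {Xss Ys Z} (fs : HomFam M.Obj M.Hom Xss Ys) (g : M.Hom Ys Z),
    HEq (map (M.comp fs g)) (N.comp (mapFam obj @map fs) (map g))

/-- A closed multicategory : a multicategory together with internal hom objects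
and evaluation morphisms such that `φ : f ↦ (1,…,1,f)·ev` is a bijection. -/
structure ClosedMulticategory extends Multicategory.{u, v} where
  ihom : List Obj → Obj → Obj
  ev : ∀ (Xs : List Obj) (Z : Obj), Hom (Xs ++ [ihom Xs Z]) Z
  closed : ∀ (Xs Ys : List Obj) (Z : Obj),
    Function.Bijective
      (fun f : Hom Ys (ihom Xs Z) => toMulticategory.plug f (ev Xs Z))

namespace ClosedMulticategory

variable (C : ClosedMulticategory.{u, v})

/-- The inverse of the bijection `φ` : currying. -/
noncomputable def curry {Xs Ys : List C.Obj} {Z : C.Obj}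
    (f : C.Hom (Xs ++ Ys) Z) : C.Hom Ys (C.ihom Xs Z) :=
  (Equiv.ofBijective _ (C.closed Xs Ys Z)).symm f

/-- The covariant action `C̲(W₁,…,Wₘ; h)` of a unary morphism `h` on internal
homs, defined by `(1,…,1,C̲(Ws;h)) · ev_{Ws;B} = ev_{Ws;A} · h`. -/
noncomputable def homCovM (Ws : List C.Obj) {A B : C.Obj} (h : C.Hom [A] B) :
    C.Hom [C.ihom Ws A] (C.ihom Ws B) :=
  C.curry (Xs := Ws) (C.toMulticategory.postcomp (C.ev Ws A) h)

/-- The contravariant action `C̲(h; Z)` of a unary morphism `h : A → B` on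
internal homs, defined by `(1,C̲(h;Z)) · ev_{A;Z} = (h,1) · ev_{B;Z}`. -/
noncomputable def homContra {A B : C.Obj} (h : C.Hom [A] B) (Z : C.Obj) :
    C.Hom [C.ihom [B] Z] (C.ihom [A] Z) :=
  C.curry (Xs := [A]) (C.toMulticategory.plugFirst h (C.ev [B] Z))

/-- The contravariant action `C̲(f₁,…,fₘ; Z)` of a family of unary morphisms on
internal homs. -/
noncomputable def homContraM {As Bs : List C.Obj}
    (fs : HomFam C.Obj C.Hom (As.map fun a => [a]) Bs) (Z : C.Obj) :
    C.Hom [C.ihom Bs Z] (C.ihom As Z) :=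
  C.curry (Xs := As) (C.toMulticategory.sideComp fs (C.ev Bs Z))

/-- Composition `μ` of the `C`-category `C̲`, determined by
`(1_X, μ)·ev_{X;Z} = (ev_{X;Y},1)·ev_{Y;Z}`. -/
noncomputable def mu (X Y Z : C.Obj) :
    C.Hom [C.ihom [X] Y, C.ihom [Y] Z] (C.ihom [X] Z) :=
  C.curry (Xs := [X])
    (C.toMulticategory.plugFirst (Xs := [X, C.ihom [X] Y]) (Γ := [C.ihom [Y] Z])
      (C.ev [X] Y) (C.ev [Y] Z))

/-- The identity `⟨1_X⟩ : () → C̲(X;X)` of the `C`-category `C̲`. -/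
noncomputable def oneHom (X : C.Obj) : C.Hom [] (C.ihom [X] X) :=
  C.curry (Xs := [X]) (Ys := []) (C.ident X)

/-- The morphism `L^X_{YZ} : C̲(Y;Z) → C̲(C̲(X;Y);C̲(X;Z))`, uniquely determined
by `(1, L^X_{YZ}) · ev = μ`. -/
noncomputable def Lhat (X Y Z : C.Obj) :
    C.Hom [C.ihom [Y] Z] (C.ihom [C.ihom [X] Y] (C.ihom [X] Z)) :=
  C.curry (Xs := [C.ihom [X] Y]) (C.mu X Y Z)

/-- The action `C̲(u;1) : C̲(1;X) → C̲(;X) = X` of a nullary morphism `u`. -/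
def uAct {one : C.Obj} (u : C.Hom [] one) (X : C.Obj) :
    C.Hom [C.ihom [one] X] X :=
  C.toMulticategory.plugFirst u (C.ev [one] X)

/-- `(one, u)` is a unit object of the closed multicategory `C` if all the
morphisms `C̲(u;1) : C̲(1;X) → X` are invertible. -/
def IsUnitObj (one : C.Obj) (u : C.Hom [] one) : Prop :=
  ∀ X : C.Obj, ∃ inv : C.Hom [X] (C.ihom [one] X),
    C.toMulticategory.comp1 (C.uAct u X) inv = C.ident (C.ihom [one] X) ∧
    C.toMulticategory.comp1 inv (C.uAct u X) = C.ident X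

end ClosedMulticategory

/-- The closing transformation `F̲_{Xs;Z} : F C̲(Xs;Z) → D̲(F Xs; FZ)` of a
multifunctor between closed multicategories, i.e. the unique morphism with
`(1,…,1,F̲) · ev^D = F(ev^C)`. -/
noncomputable def closingTrans {C D : ClosedMulticategory.{u, v}}
    (F : Multifunctor C.toMulticategory D.toMulticategory)
    (Xs : List C.Obj) (Z : C.Obj) :
    D.Hom [F.obj (C.ihom Xs Z)] (D.ihom (Xs.map F.obj) (F.obj Z)) :=
  D.curry (Xs := Xs.map F.obj)
    (cast (congrArg (D.Hom · (F.obj Z)) (List.map_append (f := F.obj) (l₁ := Xs) (l₂ := [C.ihom Xs Z])))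
      (F.map (C.ev Xs Z)))

/-! Both sides are determined by the morphism they give when plugged into `ev^E`.
Plugging `(G F̲)·G̲` into `ev^E` is, by associativity, plugging `G F̲` into
`(1,…,1,G̲)·ev^E = G(ev^D)`. A multifunctor preserves plugging, so this is
`G((1,…,1,F̲)·ev^D) = G(F(ev^C))`. -/

@[simp]
theorem List.flatten_map_singleton {α : Type*} (l : List α) :
    (l.map fun y => [y]).flatten = l :=
  List.flatMap_singleton' l

@[simp]
theorem List.flatten_map_singleton_singleton {α : Type*} (l : List α) :
    (l.map fun y => [[y]]).flatten = l.map fun y => [y] :=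
  List.map_eq_flatMap.symm

theorem HomFam.cons_congr {Xs Xs' : List Obj} {Y : Obj} {Xss Xss' Ys Ys'}
    (hXs : Xs = Xs') (hXss : Xss = Xss') (hYs : Ys = Ys')
    {f : Hom Xs Y} {f' : Hom Xs' Y}
    {fs : HomFam Obj Hom Xss Ys} {fs' : HomFam Obj Hom Xss' Ys'}
    (hf : f ≍ f') (hfs : fs ≍ fs') :
    HomFam.cons f fs ≍ HomFam.cons f' fs' := by
  subst hXs hXss hYs; cases hf; cases hfs; rfl

theorem appendFam_congr {A A' C C' : List (List Obj)} {B B' D D' : List Obj}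
    (hA : A = A') (hB : B = B') (hC : C = C') (hD : D = D')
    {u : HomFam Obj Hom A B} {u' : HomFam Obj Hom A' B'}
    {v : HomFam Obj Hom C D} {v' : HomFam Obj Hom C' D'}
    (hu : u ≍ u') (hv : v ≍ v') :
    appendFam u v ≍ appendFam u' v' := by
  subst hA hB hC hD; cases hu; cases hv; rfl

theorem appendFam_assoc {A C P : List (List Obj)} {B D Q : List Obj}
    (u : HomFam Obj Hom A B) (v : HomFam Obj Hom C D) (w : HomFam Obj Hom P Q) :
    appendFam (appendFam u v) w ≍ appendFam u (appendFam v w) := by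
  induction u with
  | nil => rfl
  | cons f fs ih =>
    exact HomFam.cons_congr rfl (List.append_assoc ..) (List.append_assoc ..) .rfl ih

def appendFamFam : ∀ {A B C D}, FamFam Obj Hom A B → FamFam Obj Hom C D →
    FamFam Obj Hom (A ++ C) (B ++ D)
  | _, _, _, _, .nil, t => t
  | _, _, _, _, .cons u us, t => .cons u (appendFamFam us t)

def singletonIdFamFam (ident : ∀ X : Obj, Hom [X] X) : ∀ Ys : List Obj,
    FamFam Obj Hom (Ys.map fun y => [[y]]) (Ys.map fun y => [y])
  | [] => .nil
  | y :: ys => .cons (.cons (ident y) .nil) (singletonIdFamFam ident ys)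

theorem flattenFam_appendFamFam {A C : List (List (List Obj))} {B D : List (List Obj)}
    (u : FamFam Obj Hom A B) (v : FamFam Obj Hom C D) :
    flattenFam (appendFamFam u v) ≍ appendFam (flattenFam u) (flattenFam v) := by
  induction u with
  | nil => rfl
  | cons fs us ih =>
    refine HEq.trans ?_ (appendFam_assoc ..).symm
    exact appendFam_congr rfl rfl (by simp) (by simp) .rfl ih

theorem flattenFam_singletonIdFamFam (ident : ∀ X : Obj, Hom [X] X) (Ys : List Obj) :
    flattenFam (singletonIdFamFam ident Ys) ≍ idFam ident Ys := by
  induction Ys with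
  | nil => rfl
  | cons y ys ih => exact HomFam.cons_congr rfl (by simp) (by simp) .rfl ih

theorem zipComp_appendFamFam
    (comp : ∀ {Xss Ys Z}, HomFam Obj Hom Xss Ys → Hom Ys Z → Hom Xss.flatten Z)
    {Xsss Yss Zs Xsss' Yss' Zs'}
    (A : FamFam Obj Hom Xsss Yss) (B : FamFam Obj Hom Xsss' Yss')
    (u : HomFam Obj Hom Yss Zs) (v : HomFam Obj Hom Yss' Zs') :
    zipComp comp (appendFamFam A B) (appendFam u v) ≍
      appendFam (zipComp comp A u) (zipComp comp B v) := by
  induction A generalizing Zs with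
  | nil => cases u; rfl
  | cons fs A' ih =>
    cases u with
    | cons g u' => exact HomFam.cons_congr rfl (by simp) rfl .rfl (ih u')

namespace Multicategory

variable (M : Multicategory.{u, v})

theorem comp_congr {Xss Xss' : List (List M.Obj)} {Ys Ys' : List M.Obj} {Z : M.Obj}
    (hXss : Xss = Xss') (hYs : Ys = Ys')
    {fs : HomFam M.Obj M.Hom Xss Ys} {fs' : HomFam M.Obj M.Hom Xss' Ys'}
    {g : M.Hom Ys Z} {g' : M.Hom Ys' Z} (hfs : fs ≍ fs') (hg : g ≍ g') :
    M.comp fs g ≍ M.comp fs' g' := by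
  subst hXss hYs; cases hfs; cases hg; rfl

theorem zipComp_singletonIdFamFam_idFam (Ys : List M.Obj) :
    zipComp (fun fs g => M.comp fs g) (singletonIdFamFam M.ident Ys) (idFam M.ident Ys) ≍
      idFam M.ident Ys := by
  induction Ys with
  | nil => rfl
  | cons y ys ih => exact HomFam.cons_congr rfl (by simp) rfl (M.comp_id (M.ident y)) ih

/-- Associativity applied to the family of families `((1),…,(1),(a))` and the family
`(1,…,1,b)`. -/
theorem plug_postcomp {Xs Ys : List M.Obj} {Q R Z : M.Obj}
    (a : M.Hom Ys Q) (b : M.Hom [Q] R) (g : M.Hom (Xs ++ [R]) Z) :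
    M.plug (M.postcomp a b) g = M.plug a (M.plug b g) := by
  let fss := appendFamFam (singletonIdFamFam M.ident Xs) (.cons (.cons a .nil) .nil)
  let gs := appendFam (idFam M.ident Xs) (.cons b .nil)
  have hzip : appendFam (idFam M.ident Xs) (.cons (M.postcomp a b) .nil) ≍
      zipComp (fun fs g => M.comp fs g) fss gs := by
    refine HEq.trans ?_ (zipComp_appendFamFam ..).symm
    refine appendFam_congr (by simp) rfl (by simp) rfl ?_ ?_
    · exact (M.zipComp_singletonIdFamFam_idFam Xs).symm
    · exact HomFam.cons_congr (by simp) rfl rfl (cast_heq _ _) .rfl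
  have hflat : flattenFam fss ≍ appendFam (idFam M.ident Xs) (.cons a .nil) :=
    (flattenFam_appendFamFam ..).trans <|
      appendFam_congr (by simp) (by simp) (by simp) (by simp)
        (flattenFam_singletonIdFamFam M.ident Xs) .rfl
  exact eq_of_heq <| (cast_heq _ _).trans <|
    (M.comp_congr (by simp) rfl hzip .rfl).trans <|
    (M.assoc fss gs g).trans <|
    (M.comp_congr (by simp) (by simp) hflat (cast_heq _ _).symm).trans (cast_heq _ _).symm

end Multicategory

theorem mapFam_appendFam {M N : Multicategory.{u, v}} (F : Multifunctor M N)
    {A C : List (List M.Obj)} {B D : List M.Obj}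
    (u : HomFam M.Obj M.Hom A B) (v : HomFam M.Obj M.Hom C D) :
    mapFam F.obj F.map (appendFam u v) ≍
      appendFam (mapFam F.obj F.map u) (mapFam F.obj F.map v) := by
  induction u with
  | nil => rfl
  | cons f fs ih => exact HomFam.cons_congr rfl (by simp) (by simp) .rfl ih

theorem mapFam_idFam {M N : Multicategory.{u, v}} (F : Multifunctor M N) (Ys : List M.Obj) :
    mapFam F.obj F.map (idFam M.ident Ys) ≍ idFam N.ident (Ys.map F.obj) := by
  induction Ys with
  | nil => rfl
  | cons y ys ih => exact HomFam.cons_congr rfl (by simp) rfl (heq_of_eq (F.map_ident y)) ih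

namespace Multifunctor

variable {M N : Multicategory.{u, v}} (F : Multifunctor M N)

theorem map_congr {Xs Xs' : List M.Obj} {Y : M.Obj} (h : Xs = Xs')
    {x : M.Hom Xs Y} {x' : M.Hom Xs' Y} (hx : x ≍ x') :
    F.map x ≍ F.map x' := by
  subst h; cases hx; rfl

theorem map_plug {Xs Ys : List M.Obj} {H Z : M.Obj} (f : M.Hom Ys H)
    (g : M.Hom (Xs ++ [H]) Z) :
    F.map (M.plug f g) ≍
      N.plug (F.map f) (cast (congrArg (N.Hom · (F.obj Z)) (List.map_append ..)) (F.map g)) := by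
  have hfam : mapFam F.obj F.map (appendFam (idFam M.ident Xs) (.cons f .nil)) ≍
      appendFam (idFam N.ident (Xs.map F.obj)) (.cons (F.map f) .nil) :=
    (mapFam_appendFam F ..).trans <|
      appendFam_congr (by simp) rfl rfl rfl (mapFam_idFam F Xs) .rfl
  exact (F.map_congr (M.sflat Xs Ys).symm (cast_heq _ _)).trans <|
    (F.map_comp ..).trans <|
    (N.comp_congr (by simp) (by simp) hfam (cast_heq _ _).symm).trans (cast_heq _ _).symm

end Multifunctor

namespace ClosedMulticategory

variable (C : ClosedMulticategory.{u, v})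

theorem plug_curry_ev {Xs Ys : List C.Obj} {Z : C.Obj} (f : C.Hom (Xs ++ Ys) Z) :
    C.plug (C.curry f) (C.ev Xs Z) = f :=
  (Equiv.ofBijective _ (C.closed Xs Ys Z)).apply_symm_apply f

theorem curry_eq_iff {Xs Ys : List C.Obj} {Z : C.Obj} (f : C.Hom (Xs ++ Ys) Z)
    (g : C.Hom Ys (C.ihom Xs Z)) :
    C.curry f = g ↔ f = C.plug g (C.ev Xs Z) :=
  Equiv.symm_apply_eq _

end ClosedMulticategory

theorem plug_closingTrans_ev {C D : ClosedMulticategory.{u, v}}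
    (F : Multifunctor C.toMulticategory D.toMulticategory) (Xs : List C.Obj) (Z : C.Obj) :
    D.plug (closingTrans F Xs Z) (D.ev (Xs.map F.obj) (F.obj Z)) =
      cast (congrArg (D.Hom · (F.obj Z)) (List.map_append ..)) (F.map (C.ev Xs Z)) :=
  D.plug_curry_ev _

/-- For multifunctors `C --F--> D --G--> E` between closed
multicategories, the closing transformation of the composite `G ∘ F` (i.e. the
unique morphism `t` with `(1,…,1,t)·ev^E = G(F(ev^C))`, expressed below by
currying `G(F(ev^C))`) equals `G(F̲) · G̲`. -/
theorem closingTrans_comp (C D E : ClosedMulticategory.{u, v})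
    (F : Multifunctor C.toMulticategory D.toMulticategory)
    (G : Multifunctor D.toMulticategory E.toMulticategory)
    (Xs : List C.Obj) (Z : C.Obj) :
    E.curry (Xs := (Xs.map F.obj).map G.obj)
      (cast (show E.Hom (((Xs ++ [C.ihom Xs Z]).map F.obj).map G.obj)
              (G.obj (F.obj Z))
            = E.Hom ((Xs.map F.obj).map G.obj ++ [G.obj (F.obj (C.ihom Xs Z))])
              (G.obj (F.obj Z)) by
          simp)
        (G.map (F.map (C.ev Xs Z))))
      = E.toMulticategory.postcomp (G.map (closingTrans F Xs Z))
          (closingTrans G (Xs.map F.obj) (F.obj Z)) := by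
  rw [E.curry_eq_iff, Multicategory.plug_postcomp, plug_closingTrans_ev G]
  have hF : F.map (C.ev Xs Z) ≍
      D.plug (closingTrans F Xs Z) (D.ev (Xs.map F.obj) (F.obj Z)) := by
    rw [plug_closingTrans_ev]; exact (cast_heq _ _).symm
  exact eq_of_heq <| (cast_heq _ _).trans <| (G.map_congr (by simp) hF).trans (G.map_plug ..)
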